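/- Let \kappa > 0 and \rho_1,\ldots,\rho_M \in \mathbb{R}. The function Z(x; y_1,\ldots,y_M) = \prod_K (y_K - x)^{\rho_K/\kappa} \prod_{J<K}(y_J - y_K)^{\rho_J\rho_K/(2\kappa)} (on a domain of fixed ordering with positive factors) satisfies the null field equation \frac{\kappa}{2}\partial_x^2 Z + \sum_K (\frac{2}{y_K-x}\partial_{y_K} - \frac{2\delta_K}{(y_K-x)^2}) Z = 0, where \delta_K = \frac{\rho_K(\rho_K + 4 - \kappa)}{4\kappa}. -/

import Mathlib

open scoped BigOperators

/-- The SLE_κ(ρ₁,…,ρ_M) partition function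
`Z(x; y₁,…,y_M) = ∏_K (y_K - x)^(ρ_K/κ) · ∏_{J<K} (y_J - y_K)^(ρ_Jρ_K/(2κ))`. -/
noncomputable def sleRhoZ (κ : ℝ) {M : ℕ} (ρ : Fin M → ℝ) (x : ℝ) (y : Fin M → ℝ) : ℝ :=
  (∏ K, (y K - x) ^ (ρ K / κ)) *
    ∏ p ∈ Finset.univ.filter (fun p : Fin M × Fin M => p.1 < p.2),
      (y p.1 - y p.2) ^ (ρ p.1 * ρ p.2 / (2 * κ))

lemma sum_sum_symm {M : ℕ} (f : Fin M → Fin M → ℝ) (hf : ∀ J K, f J K = f K J) :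
    ∑ J, ∑ K, f J K = (∑ K, f K K)
      + 2 * ∑ p ∈ Finset.univ.filter (fun p : Fin M × Fin M => p.1 < p.2), f p.1 p.2 := by
  rw [← Finset.sum_product', Finset.univ_product_univ]
  rw [← Finset.sum_filter_add_sum_filter_not (Finset.univ : Finset (Fin M × Fin M))
      (fun p : Fin M × Fin M => p.1 < p.2)]
  have h2 : ∑ p ∈ Finset.univ.filter (fun p : Fin M × Fin M => ¬ p.1 < p.2), f p.1 p.2
      = (∑ K, f K K) + ∑ p ∈ Finset.univ.filter
        (fun p : Fin M × Fin M => p.1 < p.2), f p.1 p.2 := by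
    rw [← Finset.sum_filter_add_sum_filter_not (Finset.univ.filter
      (fun p : Fin M × Fin M => ¬ p.1 < p.2)) (fun p : Fin M × Fin M => p.1 = p.2)]
    congr 1
    · rw [Finset.filter_filter]
      apply Finset.sum_nbij' (fun p => p.1) (fun K => (K, K))
      all_goals simp
      all_goals intro a b h1 h2; subst h2; rfl
    · rw [Finset.filter_filter]
      apply Finset.sum_nbij' (fun p => (p.2, p.1)) (fun p => (p.2, p.1))
      · simp; intro a b h1 h2; omega
      · simp; intro a b h; omega
      · simp
      · simp
      · intro p hp; exact (hf p.2 p.1).symm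
  rw [h2]; ring

lemma diag_identity (κ r d : ℝ) (hκ : κ ≠ 0) (hd : d ≠ 0) :
    κ/2 * (r/κ * d⁻¹ * (r/κ * d⁻¹)) - κ/2 * (r/κ * (d^2)⁻¹)
      + (2/d * (r/κ * d⁻¹) - 2*(r*(r+4-κ)/(4*κ))/d^2) = 0 := by
  field_simp
  ring

lemma pair_identity (κ ρ1 ρ2 d1 d2 : ℝ) (hκ : κ ≠ 0) (h1 : d1 ≠ 0) (h2 : d2 ≠ 0)
    (h12 : d1 - d2 ≠ 0) :
    κ * (ρ1/κ * d1⁻¹ * (ρ2/κ * d2⁻¹))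
      + (2/d1 * (ρ1*ρ2/(2*κ) * (d1-d2)⁻¹) - 2/d2 * (ρ1*ρ2/(2*κ) * (d1-d2)⁻¹)) = 0 := by
  field_simp
  ring

lemma null_field_algebra (κ : ℝ) (hκ : 0 < κ) {M : ℕ} (ρ : Fin M → ℝ)
    (x : ℝ) (y : Fin M → ℝ)
    (hxy : ∀ K, 0 < y K - x) (hyy : ∀ J K : Fin M, J < K → 0 < y J - y K) :
    κ / 2 * ((∑ K, ρ K / κ * (y K - x)⁻¹) ^ 2 - ∑ K, ρ K / κ * ((y K - x) ^ 2)⁻¹)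
      + ∑ K, (2 / (y K - x) * (ρ K / κ * (y K - x)⁻¹ +
          ∑ p ∈ Finset.univ.filter (fun p : Fin M × Fin M => p.1 < p.2),
            (if p.1 = K then ρ p.1 * ρ p.2 / (2 * κ) * (y p.1 - y p.2)⁻¹
             else if p.2 = K then -(ρ p.1 * ρ p.2 / (2 * κ) * (y p.1 - y p.2)⁻¹) else 0))
        - 2 * (ρ K * (ρ K + 4 - κ) / (4 * κ)) / (y K - x) ^ 2) = 0 := by
  have hκ0 : κ ≠ 0 := ne_of_gt hκ
  have hd : ∀ K, y K - x ≠ 0 := fun K => ne_of_gt (hxy K)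
  set P := Finset.univ.filter (fun p : Fin M × Fin M => p.1 < p.2) with hP
  -- expand the square
  have step1 : (∑ K, ρ K / κ * (y K - x)⁻¹) ^ 2
      = (∑ K, (ρ K / κ * (y K - x)⁻¹) * (ρ K / κ * (y K - x)⁻¹))
        + 2 * ∑ p ∈ P, (ρ p.1 / κ * (y p.1 - x)⁻¹) * (ρ p.2 / κ * (y p.2 - x)⁻¹) := by
    rw [sq, Finset.sum_mul_sum]
    exact sum_sum_symm (fun J K => (ρ J / κ * (y J - x)⁻¹) * (ρ K / κ * (y K - x)⁻¹))
      (fun J K => by ring)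
  -- collapse the inner sum over K for each pair p
  have step2 : ∀ p ∈ P, ∑ K, (2 / (y K - x) *
      (if p.1 = K then ρ p.1 * ρ p.2 / (2 * κ) * (y p.1 - y p.2)⁻¹
       else if p.2 = K then -(ρ p.1 * ρ p.2 / (2 * κ) * (y p.1 - y p.2)⁻¹) else 0))
      = 2 / (y p.1 - x) * (ρ p.1 * ρ p.2 / (2 * κ) * (y p.1 - y p.2)⁻¹)
        - 2 / (y p.2 - x) * (ρ p.1 * ρ p.2 / (2 * κ) * (y p.1 - y p.2)⁻¹) := by
    intro p hp
    have hplt : p.1 < p.2 := (Finset.mem_filter.mp hp).2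
    have hne : p.1 ≠ p.2 := ne_of_lt hplt
    have hpt : ∀ K : Fin M, 2 / (y K - x) *
        (if p.1 = K then ρ p.1 * ρ p.2 / (2 * κ) * (y p.1 - y p.2)⁻¹
         else if p.2 = K then -(ρ p.1 * ρ p.2 / (2 * κ) * (y p.1 - y p.2)⁻¹) else 0)
        = (if p.1 = K then 2 / (y K - x) * (ρ p.1 * ρ p.2 / (2 * κ) * (y p.1 - y p.2)⁻¹) else 0)
          + (if p.2 = K then -(2 / (y K - x) * (ρ p.1 * ρ p.2 / (2 * κ) * (y p.1 - y p.2)⁻¹))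
             else 0) := by
      intro K
      by_cases e1 : p.1 = K
      · have e2 : ¬ p.2 = K := fun h => hne (e1.trans h.symm)
        rw [if_pos e1, if_pos e1, if_neg e2]; ring
      · by_cases e2 : p.2 = K
        · rw [if_neg e1, if_neg e1, if_pos e2, if_pos e2]; ring
        · rw [if_neg e1, if_neg e1, if_neg e2, if_neg e2]; ring
    rw [Finset.sum_congr rfl (fun K _ => hpt K), Finset.sum_add_distrib,
      Finset.sum_ite_eq Finset.univ p.1
        (fun K => 2 / (y K - x) * (ρ p.1 * ρ p.2 / (2 * κ) * (y p.1 - y p.2)⁻¹)),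
      Finset.sum_ite_eq Finset.univ p.2
        (fun K => -(2 / (y K - x) * (ρ p.1 * ρ p.2 / (2 * κ) * (y p.1 - y p.2)⁻¹)))]
    simp only [Finset.mem_univ, if_true]
    ring
  -- split the main sum
  have step3 : ∑ K, (2 / (y K - x) * (ρ K / κ * (y K - x)⁻¹ +
      ∑ p ∈ P, (if p.1 = K then ρ p.1 * ρ p.2 / (2 * κ) * (y p.1 - y p.2)⁻¹
        else if p.2 = K then -(ρ p.1 * ρ p.2 / (2 * κ) * (y p.1 - y p.2)⁻¹) else 0)))
      = (∑ K, 2 / (y K - x) * (ρ K / κ * (y K - x)⁻¹))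
        + ∑ p ∈ P, (2 / (y p.1 - x) * (ρ p.1 * ρ p.2 / (2 * κ) * (y p.1 - y p.2)⁻¹)
          - 2 / (y p.2 - x) * (ρ p.1 * ρ p.2 / (2 * κ) * (y p.1 - y p.2)⁻¹)) := by
    simp only [mul_add, Finset.sum_add_distrib]
    congr 1
    simp only [Finset.mul_sum]
    rw [Finset.sum_comm]
    exact Finset.sum_congr rfl step2
  -- assemble
  rw [step1, Finset.sum_sub_distrib, step3]
  have key1 : κ / 2 * (∑ K, (ρ K / κ * (y K - x)⁻¹) * (ρ K / κ * (y K - x)⁻¹))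
      - κ / 2 * (∑ K, ρ K / κ * ((y K - x) ^ 2)⁻¹)
      + ((∑ K, 2 / (y K - x) * (ρ K / κ * (y K - x)⁻¹))
        - ∑ K, 2 * (ρ K * (ρ K + 4 - κ) / (4 * κ)) / (y K - x) ^ 2) = 0 := by
    simp only [Finset.mul_sum, ← Finset.sum_sub_distrib, ← Finset.sum_add_distrib]
    refine Finset.sum_eq_zero fun K _ => ?_
    linear_combination diag_identity κ (ρ K) (y K - x) hκ0 (hd K)
  have key2 : κ * (∑ p ∈ P, (ρ p.1 / κ * (y p.1 - x)⁻¹) * (ρ p.2 / κ * (y p.2 - x)⁻¹))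
      + ∑ p ∈ P, (2 / (y p.1 - x) * (ρ p.1 * ρ p.2 / (2 * κ) * (y p.1 - y p.2)⁻¹)
        - 2 / (y p.2 - x) * (ρ p.1 * ρ p.2 / (2 * κ) * (y p.1 - y p.2)⁻¹)) = 0 := by
    simp only [Finset.mul_sum, ← Finset.sum_add_distrib]
    refine Finset.sum_eq_zero fun p hp => ?_
    have hplt : p.1 < p.2 := (Finset.mem_filter.mp hp).2
    have h12 : (y p.1 - x) - (y p.2 - x) ≠ 0 := by
      have := ne_of_gt (hyy p.1 p.2 hplt)
      intro h; apply this; linarith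
    have hw : y p.1 - y p.2 = (y p.1 - x) - (y p.2 - x) := by ring
    rw [hw]
    linear_combination pair_identity κ (ρ p.1) (ρ p.2) (y p.1 - x) (y p.2 - x) hκ0
      (hd p.1) (hd p.2) h12
  linarith [key1, key2]

lemma sleRhoZ_eq_exp (κ : ℝ) {M : ℕ} (ρ : Fin M → ℝ) (x : ℝ) (y : Fin M → ℝ)
    (hxy : ∀ K, 0 < y K - x) (hyy : ∀ J K, J < K → 0 < y J - y K) :
    sleRhoZ κ ρ x y =
      Real.exp ((∑ K, ρ K / κ * Real.log (y K - x)) +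
        ∑ p ∈ Finset.univ.filter (fun p : Fin M × Fin M => p.1 < p.2),
          ρ p.1 * ρ p.2 / (2 * κ) * Real.log (y p.1 - y p.2)) := by
  rw [Real.exp_add, Real.exp_sum, Real.exp_sum]
  unfold sleRhoZ
  congr 1
  · exact Finset.prod_congr rfl fun K _ => by
      rw [Real.rpow_def_of_pos (hxy K), mul_comm]
  · refine Finset.prod_congr rfl fun p hp => ?_
    rw [Real.rpow_def_of_pos (hyy p.1 p.2 (Finset.mem_filter.mp hp).2), mul_comm]

lemma derivX (κ : ℝ) (hκ : 0 < κ) {M : ℕ} (ρ : Fin M → ℝ) (x : ℝ) (y : Fin M → ℝ)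
    (hxy : ∀ K, 0 < y K - x) (hyy : ∀ J K, J < K → 0 < y J - y K) :
    deriv (deriv fun t : ℝ => sleRhoZ κ ρ t y) x =
      sleRhoZ κ ρ x y * ((∑ K, ρ K / κ * (y K - x)⁻¹) ^ 2
        - ∑ K, ρ K / κ * ((y K - x) ^ 2)⁻¹) := by
  set U : Set ℝ := ⋂ K, Set.Iio (y K) with hUdef
  have hU : IsOpen U := isOpen_iInter_of_finite fun K => isOpen_Iio
  have hmem : ∀ t, t ∈ U ↔ ∀ K, 0 < y K - t := by
    intro t; simp [hUdef, Set.mem_iInter, sub_pos]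
  have hxU : x ∈ U := (hmem x).mpr hxy
  set C : ℝ := ∑ p ∈ Finset.univ.filter (fun p : Fin M × Fin M => p.1 < p.2),
      ρ p.1 * ρ p.2 / (2 * κ) * Real.log (y p.1 - y p.2) with hC
  set H : ℝ → ℝ := fun t => (∑ K, ρ K / κ * Real.log (y K - t)) + C with hHdef
  set G : ℝ → ℝ := fun t => ∑ K, -(ρ K / κ * (y K - t)⁻¹) with hGdef
  have h1 : ∀ t ∈ U, sleRhoZ κ ρ t y = Real.exp (H t) := fun t ht =>
    sleRhoZ_eq_exp κ ρ t y ((hmem t).mp ht) hyy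
  have hH : ∀ t ∈ U, HasDerivAt H (G t) t := by
    intro t ht
    apply HasDerivAt.add_const
    apply HasDerivAt.fun_sum
    intro K _
    have h0 : HasDerivAt (fun t : ℝ => y K - t) (-1) t := (hasDerivAt_id t).const_sub (y K)
    have h2 := (h0.log (ne_of_gt ((hmem t).mp ht K))).const_mul (ρ K / κ)
    convert h2 using 1
    · rfl
    field_simp
  have hF : ∀ t ∈ U, HasDerivAt (fun t => Real.exp (H t)) (Real.exp (H t) * G t) t :=
    fun t ht => (hH t ht).exp
  have ev : (fun t => sleRhoZ κ ρ t y) =ᶠ[nhds x] fun t => Real.exp (H t) :=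
    Filter.eventually_of_mem (hU.mem_nhds hxU) h1
  have ev2 : deriv (fun t => sleRhoZ κ ρ t y) =ᶠ[nhds x]
      fun t => Real.exp (H t) * G t := by
    refine ev.deriv.trans ?_
    exact Filter.eventually_of_mem (hU.mem_nhds hxU) fun t ht => (hF t ht).deriv
  have hG : HasDerivAt G (∑ K, -(ρ K / κ * ((y K - x) ^ 2)⁻¹)) x := by
    apply HasDerivAt.fun_sum
    intro K _
    have h0 : HasDerivAt (fun t : ℝ => y K - t) (-1) x := (hasDerivAt_id x).const_sub (y K)
    have h2 := ((h0.inv (ne_of_gt (hxy K))).const_mul (ρ K / κ)).neg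
    convert h2 using 1
    · rfl
    field_simp
  have hfin : HasDerivAt (fun t => Real.exp (H t) * G t)
      (Real.exp (H x) * G x * G x + Real.exp (H x) * ∑ K, -(ρ K / κ * ((y K - x) ^ 2)⁻¹)) x :=
    (hF x hxU).mul hG
  rw [ev2.deriv_eq, hfin.deriv, ← h1 x hxU, hGdef]
  simp only [Finset.sum_neg_distrib]
  ring

lemma derivY (κ : ℝ) (hκ : 0 < κ) {M : ℕ} (ρ : Fin M → ℝ) (x : ℝ) (y : Fin M → ℝ)
    (hxy : ∀ K, 0 < y K - x) (hyy : ∀ J K, J < K → 0 < y J - y K) (K : Fin M) :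
    deriv (fun s : ℝ => sleRhoZ κ ρ x (Function.update y K s)) (y K) =
      sleRhoZ κ ρ x y * (ρ K / κ * (y K - x)⁻¹ +
        ∑ p ∈ Finset.univ.filter (fun p : Fin M × Fin M => p.1 < p.2),
          (if p.1 = K then ρ p.1 * ρ p.2 / (2 * κ) * (y p.1 - y p.2)⁻¹
           else if p.2 = K then -(ρ p.1 * ρ p.2 / (2 * κ) * (y p.1 - y p.2)⁻¹) else 0)) := by
  -- the open neighborhood of y K
  set V : Set ℝ := Set.Ioi x ∩ ⋂ J, ({s | J < K → s < y J} ∩ {s | K < J → y J < s}) with hVdef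
  have hV : IsOpen V := by
    apply IsOpen.inter isOpen_Ioi
    apply isOpen_iInter_of_finite
    intro J
    apply IsOpen.inter
    · by_cases h : J < K
      · have : {s : ℝ | J < K → s < y J} = Set.Iio (y J) := by ext s; simp [h]
        rw [this]; exact isOpen_Iio
      · have : {s : ℝ | J < K → s < y J} = Set.univ := by ext s; simp [h]
        rw [this]; exact isOpen_univ
    · by_cases h : K < J
      · have : {s : ℝ | K < J → y J < s} = Set.Ioi (y J) := by ext s; simp [h]
        rw [this]; exact isOpen_Ioi
      · have : {s : ℝ | K < J → y J < s} = Set.univ := by ext s; simp [h]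
        rw [this]; exact isOpen_univ
  have hyV : y K ∈ V := by
    constructor
    · exact sub_pos.mp (hxy K)
    · simp only [Set.mem_iInter, Set.mem_inter_iff, Set.mem_setOf_eq]
      exact fun J => ⟨fun h => sub_pos.mp (hyy J K h), fun h => sub_pos.mp (hyy K J h)⟩
  -- positivity of update on V
  have hup1 : ∀ s ∈ V, ∀ J, 0 < Function.update y K s J - x := by
    intro s hs J
    by_cases hJ : J = K
    · subst hJ; rw [Function.update_self]; exact sub_pos.mpr hs.1
    · rw [Function.update_of_ne hJ]; exact hxy J
  have hup2 : ∀ s ∈ V, ∀ J J' : Fin M, J < J' →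
      0 < Function.update y K s J - Function.update y K s J' := by
    intro s hs J J' h
    have hs2 := Set.mem_iInter.mp hs.2
    by_cases hJ : J = K
    · have hJ' : J' ≠ K := fun hc => (ne_of_gt h) (hJ.trans hc.symm).symm
      rw [hJ, Function.update_self, Function.update_of_ne hJ']
      exact sub_pos.mpr ((hs2 J').2 (hJ ▸ h))
    · rw [Function.update_of_ne hJ]
      by_cases hJ' : J' = K
      · subst hJ'; rw [Function.update_self]
        exact sub_pos.mpr ((hs2 J).1 h)
      · rw [Function.update_of_ne hJ']; exact hyy J J' h
  set v : ℝ → ℝ := fun s =>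
      (∑ J, ρ J / κ * Real.log (Function.update y K s J - x)) +
        ∑ p ∈ Finset.univ.filter (fun p : Fin M × Fin M => p.1 < p.2),
          ρ p.1 * ρ p.2 / (2 * κ) *
            Real.log (Function.update y K s p.1 - Function.update y K s p.2) with hvdef
  have hev : (fun s => sleRhoZ κ ρ x (Function.update y K s)) =ᶠ[nhds (y K)]
      fun s => Real.exp (v s) :=
    Filter.eventually_of_mem (hV.mem_nhds hyV) fun s hs =>
      sleRhoZ_eq_exp κ ρ x (Function.update y K s) (hup1 s hs) (hup2 s hs)
  -- derivative of v at y K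
  have hv1 : HasDerivAt (fun s => ∑ J, ρ J / κ * Real.log (Function.update y K s J - x))
      (∑ J, if J = K then ρ K / κ * (y K - x)⁻¹ else 0) (y K) := by
    apply HasDerivAt.fun_sum
    intro J _
    by_cases hJ : J = K
    · subst hJ
      simp only [Function.update_self, if_pos rfl, ↓reduceIte]
      have h0 : HasDerivAt (fun s : ℝ => s - x) 1 (y J) := (hasDerivAt_id (y J)).sub_const x
      have h2 := (h0.log (ne_of_gt (hxy J))).const_mul (ρ J / κ)
      convert h2 using 1
      · rfl
      field_simp
    · simp only [Function.update_of_ne hJ, if_neg hJ]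
      exact hasDerivAt_const _ _
  have hv2 : HasDerivAt (fun s =>
      ∑ p ∈ Finset.univ.filter (fun p : Fin M × Fin M => p.1 < p.2),
        ρ p.1 * ρ p.2 / (2 * κ) *
          Real.log (Function.update y K s p.1 - Function.update y K s p.2))
      (∑ p ∈ Finset.univ.filter (fun p : Fin M × Fin M => p.1 < p.2),
        (if p.1 = K then ρ p.1 * ρ p.2 / (2 * κ) * (y p.1 - y p.2)⁻¹
         else if p.2 = K then -(ρ p.1 * ρ p.2 / (2 * κ) * (y p.1 - y p.2)⁻¹) else 0)) (y K) := by
    apply HasDerivAt.fun_sum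
    intro p hp
    have hlt : p.1 < p.2 := (Finset.mem_filter.mp hp).2
    by_cases h1 : p.1 = K
    · have h2 : p.2 ≠ K := by rw [← h1]; exact (ne_of_gt hlt)
      rw [if_pos h1]
      have h0 : HasDerivAt (fun s : ℝ => s - y p.2) 1 (y K) := (hasDerivAt_id _).sub_const _
      have hne : y K - y p.2 ≠ 0 := by
        have := hyy p.1 p.2 hlt; rw [h1] at this; exact ne_of_gt this
      have h3 := (h0.log hne).const_mul (ρ p.1 * ρ p.2 / (2 * κ))
      have hfun : (fun s : ℝ => ρ p.1 * ρ p.2 / (2 * κ) *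
          Real.log (Function.update y K s p.1 - Function.update y K s p.2)) =
          fun s : ℝ => ρ p.1 * ρ p.2 / (2 * κ) * Real.log (s - y p.2) := by
        funext s; rw [h1, Function.update_self, Function.update_of_ne h2]
      rw [hfun]
      convert h3 using 1
      · rfl
      rw [h1]
      ring
    · by_cases h2 : p.2 = K
      · rw [if_neg h1, if_pos h2]
        have h0 : HasDerivAt (fun s : ℝ => y p.1 - s) (-1) (y K) :=
          (hasDerivAt_id _).const_sub _
        have hne : y p.1 - y K ≠ 0 := by
          have := hyy p.1 p.2 hlt; rw [h2] at this; exact ne_of_gt this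
        have h3 := (h0.log hne).const_mul (ρ p.1 * ρ p.2 / (2 * κ))
        have hfun : (fun s : ℝ => ρ p.1 * ρ p.2 / (2 * κ) *
            Real.log (Function.update y K s p.1 - Function.update y K s p.2)) =
            fun s : ℝ => ρ p.1 * ρ p.2 / (2 * κ) * Real.log (y p.1 - s) := by
          funext s; rw [h2, Function.update_self, Function.update_of_ne h1]
        rw [hfun]
        convert h3 using 1
        · rfl
        rw [h2]
        ring
      · simp only [Function.update_of_ne h1, Function.update_of_ne h2, if_neg h1, if_neg h2]
        exact hasDerivAt_const _ _
  have hv : HasDerivAt v ((∑ J, if J = K then ρ K / κ * (y K - x)⁻¹ else 0) +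
      ∑ p ∈ Finset.univ.filter (fun p : Fin M × Fin M => p.1 < p.2),
        (if p.1 = K then ρ p.1 * ρ p.2 / (2 * κ) * (y p.1 - y p.2)⁻¹
         else if p.2 = K then -(ρ p.1 * ρ p.2 / (2 * κ) * (y p.1 - y p.2)⁻¹) else 0)) (y K) :=
    hv1.add hv2
  have hZ : Real.exp (v (y K)) = sleRhoZ κ ρ x y := by
    rw [sleRhoZ_eq_exp κ ρ x y hxy hyy, hvdef]
    simp [Function.update_eq_self]
  rw [hev.deriv_eq, (hv.exp).deriv, hZ]
  congr 1
  rw [Finset.sum_ite_eq' Finset.univ K (fun _ => ρ K / κ * (y K - x)⁻¹)]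
  simp

/-- The SLE_κ(ρ) partition function satisfies the null field equation
`(κ/2)∂ₓ²Z + ∑_K (2/(y_K-x)∂_{y_K} - 2δ_K/(y_K-x)²)Z = 0` with
`δ_K = ρ_K(ρ_K+4-κ)/(4κ)`, on a domain of fixed ordering with positive factors. -/
theorem sle_rho_null_field (κ : ℝ) (hκ : 0 < κ) {M : ℕ} (ρ : Fin M → ℝ)
    (x : ℝ) (y : Fin M → ℝ)
    (hxy : ∀ K, 0 < y K - x)
    (hyy : ∀ J K : Fin M, J < K → 0 < y J - y K) :
    κ / 2 * deriv (deriv fun t : ℝ => sleRhoZ κ ρ t y) x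
      + ∑ K, (2 / (y K - x) * deriv (fun s : ℝ => sleRhoZ κ ρ x (Function.update y K s)) (y K)
          - 2 * (ρ K * (ρ K + 4 - κ) / (4 * κ)) / (y K - x) ^ 2 * sleRhoZ κ ρ x y)
      = 0 := by
  have halg := null_field_algebra κ hκ ρ x y hxy hyy
  have hsum : ∑ K, (2 / (y K - x) * deriv
        (fun s : ℝ => sleRhoZ κ ρ x (Function.update y K s)) (y K)
      - 2 * (ρ K * (ρ K + 4 - κ) / (4 * κ)) / (y K - x) ^ 2 * sleRhoZ κ ρ x y)
      = sleRhoZ κ ρ x y * ∑ K, (2 / (y K - x) * (ρ K / κ * (y K - x)⁻¹ +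
        ∑ p ∈ Finset.univ.filter (fun p : Fin M × Fin M => p.1 < p.2),
          (if p.1 = K then ρ p.1 * ρ p.2 / (2 * κ) * (y p.1 - y p.2)⁻¹
           else if p.2 = K then -(ρ p.1 * ρ p.2 / (2 * κ) * (y p.1 - y p.2)⁻¹) else 0))
      - 2 * (ρ K * (ρ K + 4 - κ) / (4 * κ)) / (y K - x) ^ 2) := by
    rw [Finset.mul_sum]
    refine Finset.sum_congr rfl fun K _ => ?_
    rw [derivY κ hκ ρ x y hxy hyy K]
    ring
  rw [derivX κ hκ ρ x y hxy hyy, hsum]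
  linear_combination sleRhoZ κ ρ x y * halg
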